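/- Three-term error decomposition bound for the regularized test-power ratio: if |d̂| ≤ 4v, σ̂_λ² = σ̂² + λ, σ_λ² = σ² + λ with σ ≥ s > 0, σ̂ ≥ 0, and λ > 0, then |d̂/σ̂_λ − d/σ| ≤ (4v/(√λ · s · (s+√λ)))·|σ̂² − σ²| + 4vλ/(√(s²+λ) · s · (√(s²+λ)+s)) + (1/s)·|d̂ − d|, where σ̂_λ = √(σ̂²+λ) and σ_λ = √(σ²+λ). -/

import Mathlib

/-- three-term error decomposition bound for the regularized
test-power ratio. -/
theorem ratio_three_term_bound (v s lam d dhat σ σhat : ℝ)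
    (hv : 0 < v) (hs : 0 < s) (hlam : 0 < lam)
    (hdhat : |dhat| ≤ 4 * v) (hd : |d| ≤ 4 * v)
    (hσ : s ≤ σ) (hσhat : 0 ≤ σhat) :
    |dhat / Real.sqrt (σhat ^ 2 + lam) - d / σ|
      ≤ 4 * v / (Real.sqrt lam * s * (s + Real.sqrt lam)) * |σhat ^ 2 - σ ^ 2|
        + 4 * v * lam / (Real.sqrt (s ^ 2 + lam) * s * (Real.sqrt (s ^ 2 + lam) + s))
        + 1 / s * |dhat - d| := by
  have hσ0 : (0:ℝ) < σ := lt_of_lt_of_le hs hσ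
  set a := Real.sqrt (σhat ^ 2 + lam) with ha_def
  set b := Real.sqrt (σ ^ 2 + lam) with hb_def
  set L := Real.sqrt lam with hL_def
  set S := Real.sqrt (s ^ 2 + lam) with hS_def
  have hL : 0 < L := Real.sqrt_pos.mpr hlam
  have hS : 0 < S := Real.sqrt_pos.mpr (by positivity)
  have hLa : L ≤ a := Real.sqrt_le_sqrt (by nlinarith [sq_nonneg σhat])
  have hSb : S ≤ b := Real.sqrt_le_sqrt (by nlinarith)
  have ha : 0 < a := lt_of_lt_of_le hL hLa
  have hb : 0 < b := lt_of_lt_of_le hS hSb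
  have hσb : σ ≤ b := by
    nth_rewrite 1 [show σ = Real.sqrt (σ ^ 2) by rw [Real.sqrt_sq hσ0.le]]
    exact Real.sqrt_le_sqrt (by linarith)
  have hsb : s ≤ b := le_trans hσ hσb
  have ha2 : a ^ 2 = σhat ^ 2 + lam := Real.sq_sqrt (by positivity)
  have hb2 : b ^ 2 = σ ^ 2 + lam := Real.sq_sqrt (by positivity)
  have tri : |dhat / a - d / σ|
      ≤ |dhat / a - dhat / b| + |dhat / b - dhat / σ| + |dhat / σ - d / σ| := by
    calc |dhat / a - d / σ| ≤ |dhat / a - dhat / σ| + |dhat / σ - d / σ| :=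
          abs_sub_le _ _ _
      _ ≤ (|dhat / a - dhat / b| + |dhat / b - dhat / σ|) + |dhat / σ - d / σ| := by
          gcongr; exact abs_sub_le _ _ _
  have t1 : |dhat / a - dhat / b| ≤ 4 * v / (L * s * (s + L)) * |σhat ^ 2 - σ ^ 2| := by
    have e1 : dhat / a - dhat / b = dhat * (b - a) / (a * b) := by
      field_simp
    have e2 : |b - a| * (a + b) = |σhat ^ 2 - σ ^ 2| := by
      rw [← abs_of_pos (show (0:ℝ) < a + b by linarith), ← abs_mul,
        show (b - a) * (a + b) = σ ^ 2 - σhat ^ 2 by linear_combination hb2 - ha2,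
        abs_sub_comm]
    have e3 : |dhat / a - dhat / b| = |dhat| * |σhat ^ 2 - σ ^ 2| / (a * b * (a + b)) := by
      rw [e1, abs_div, abs_mul, abs_of_pos (show (0:ℝ) < a * b by positivity), ← e2,
        div_eq_div_iff (by positivity) (by positivity)]
      ring
    have hden : L * s * (s + L) ≤ a * b * (a + b) :=
      mul_le_mul (mul_le_mul hLa hsb hs.le ha.le) (by linarith) (by positivity)
        (by positivity)
    rw [e3, show 4 * v / (L * s * (s + L)) * |σhat ^ 2 - σ ^ 2|
        = 4 * v * |σhat ^ 2 - σ ^ 2| / (L * s * (s + L)) by ring]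
    exact div_le_div₀ (by positivity)
      (mul_le_mul_of_nonneg_right hdhat (abs_nonneg _)) (by positivity) hden
  have t2 : |dhat / b - dhat / σ| ≤ 4 * v * lam / (S * s * (S + s)) := by
    have e1 : b - σ = lam / (b + σ) := by
      rw [eq_div_iff (show b + σ ≠ 0 by positivity)]
      linear_combination hb2
    have e2 : dhat / b - dhat / σ = -(dhat * (b - σ) / (b * σ)) := by
      field_simp; ring
    have e3 : |dhat / b - dhat / σ| = |dhat| * lam / (b * σ * (b + σ)) := by
      rw [e2, abs_neg, abs_div, abs_mul, abs_of_nonneg (by linarith : (0:ℝ) ≤ b - σ),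
        abs_of_pos (show (0:ℝ) < b * σ by positivity), e1,
        div_eq_div_iff (by positivity) (by positivity)]
      field_simp
    have hden : S * s * (S + s) ≤ b * σ * (b + σ) :=
      mul_le_mul (mul_le_mul hSb hσ hs.le hb.le) (by linarith) (by positivity)
        (by positivity)
    rw [e3]
    exact div_le_div₀ (by positivity)
      (mul_le_mul_of_nonneg_right hdhat hlam.le) (by positivity) hden
  have t3 : |dhat / σ - d / σ| ≤ 1 / s * |dhat - d| := by
    rw [show dhat / σ - d / σ = (dhat - d) / σ by ring, abs_div, abs_of_pos hσ0]
    calc |dhat - d| / σ ≤ |dhat - d| / s := by gcongr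
      _ = 1 / s * |dhat - d| := by ring
  linarith
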